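/- Let M = 2c/a and let υ± > 0. Define U(κ) := { (υ±)^{m+1} + ((m+1)/a)·[ G(c) − G(c − a·κ) ] }^{1/(m+1)} for κ ∈ [0, M]. Then: U is continuous on [0, M] and continuously differentiable on (0, M); U(0) = U(M) = υ±; U(κ) ≥ υ± > 0 for all κ ∈ [0, M]; and U(κ)^m·U'(κ) = g(c − a·κ) for every κ ∈ (0, M). Consequently there exist real numbers ξ₋ < ξ₊ and functions κ ∈ C¹([ξ₋, ξ₊]) and υ := κ' continuous on [ξ₋, ξ₊] such that κ(ξ₋) = 0, κ(ξ₊) = M, υ(ξ₋) = υ(ξ₊) = υ±, and, for all ξ ∈ (ξ₋, ξ₊), κ'(ξ) = υ(ξ) and υ(ξ)^{m−1}·υ'(ξ) = g( c − a·κ(ξ) ). -/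

import Mathlib

/-!
`Φ` is an odd increasing bijection of `ℝ` onto `(-c, c)`, so `g = Φ⁻¹` is continuous, odd and
increasing on `(-c, c)`. The decay of `Φ'` gives `c - Φ y = O(y^(-α))`, i.e.
`g s = O((c - s)^(-1/α))` as `s → c`, which is integrable because `α > 1`. Hence `G` is
continuous on `[-c, c]`, even, increasing on `[0, c]`, with `G' = g` inside; so
`G (c - aκ) ≤ G c`, `U ≥ υ±` with equality at `κ = 0, M`, and differentiating
`U^(m+1) = υ±^(m+1) + (m+1)/a (G c - G (c - aκ))` gives `U^m U' = g (c - aκ)`.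

The wave is the solution of the autonomous equation `κ' = U(κ)`, `κ(0) = 0`, obtained by
inverting `k ↦ ∫₀ᵏ 1/U` (with `U` extended by constants outside `[0, M]`). Then
`κ'' = U'(κ) U(κ)`, so `υ^(m-1) υ' = U(κ)^m U'(κ) = g (c - aκ)` for `υ = κ' = U(κ)`.
-/

open Set Filter MeasureTheory Topology

section SigmoidInverse

variable {Φ : ℝ → ℝ} {c : ℝ}

theorem StrictMono.lt_of_tendsto_atTop (hΦ : StrictMono Φ) (hlim : Tendsto Φ atTop (𝓝 c))
    (y : ℝ) : Φ y < c :=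
  (hΦ (lt_add_one y)).trans_le (hΦ.monotone.ge_of_tendsto hlim _)

theorem range_eq_Ioo_of_odd (hΦ : StrictMono Φ) (hΦc : Continuous Φ)
    (hodd : ∀ y, Φ (-y) = -Φ y) (hlim : Tendsto Φ atTop (𝓝 c)) :
    range Φ = Ioo (-c) c := by
  have hlt := hΦ.lt_of_tendsto_atTop hlim
  have hlimBot : Tendsto Φ atBot (𝓝 (-c)) := by
    simpa [Function.comp_def, hodd] using (hlim.comp tendsto_neg_atBot_atTop).neg
  refine Subset.antisymm ?_ fun v hv => ?_
  · rintro _ ⟨y, rfl⟩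
    exact ⟨by linarith [hodd y, hlt (-y)], hlt y⟩
  · obtain ⟨y₁, hy₁⟩ := (hlimBot.eventually (eventually_lt_nhds hv.1)).exists
    obtain ⟨y₂, hy₂⟩ := (hlim.eventually (eventually_gt_nhds hv.2)).exists
    exact mem_range_of_exists_le_of_exists_ge hΦc ⟨y₁, hy₁.le⟩ ⟨y₂, hy₂.le⟩

theorem apply_invFun_of_mem_Ioo (hrange : range Φ = Ioo (-c) c) {v : ℝ} (hv : v ∈ Ioo (-c) c) :
    Φ (Function.invFun Φ v) = v :=
  Function.invFun_eq (hrange ▸ hv : v ∈ range Φ)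

theorem strictMonoOn_invFun (hΦ : StrictMono Φ) (hrange : range Φ = Ioo (-c) c) :
    StrictMonoOn (Function.invFun Φ) (Ioo (-c) c) :=
  fun v hv w hw hvw => hΦ.lt_iff_lt.mp <| by
    rwa [apply_invFun_of_mem_Ioo hrange hv, apply_invFun_of_mem_Ioo hrange hw]

theorem invFun_neg_of_odd (hΦ : StrictMono Φ) (hrange : range Φ = Ioo (-c) c)
    (hodd : ∀ y, Φ (-y) = -Φ y) {v : ℝ} (hv : v ∈ Ioo (-c) c) :
    Function.invFun Φ (-v) = -Function.invFun Φ v := by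
  conv_lhs => rw [← apply_invFun_of_mem_Ioo hrange hv, ← hodd]
  exact Function.leftInverse_invFun hΦ.injective _

theorem continuousOn_invFun (hΦ : StrictMono Φ) (hrange : range Φ = Ioo (-c) c) :
    ContinuousOn (Function.invFun Φ) (Ioo (-c) c) := by
  have himage : Function.invFun Φ '' Ioo (-c) c = univ :=
    eq_univ_of_forall fun y => ⟨Φ y, hrange ▸ mem_range_self y,
      Function.leftInverse_invFun hΦ.injective y⟩
  exact fun v hv => (continuousAt_of_monotoneOn_of_image_mem_nhds
    (strictMonoOn_invFun hΦ hrange).monotoneOn (isOpen_Ioo.mem_nhds hv)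
    (himage ▸ univ_mem)).continuousWithinAt

end SigmoidInverse

theorem sub_le_of_deriv_le_rpow {f : ℝ → ℝ} {c C α y₀ : ℝ} (hf : Differentiable ℝ f)
    (hlim : Tendsto f atTop (𝓝 c)) (hα : 0 < α) (hy₀ : 0 < y₀)
    (hdecay : ∀ y, y₀ ≤ y → deriv f y ≤ C * y ^ (-α - 1)) {y : ℝ} (hy : y₀ ≤ y) :
    c - f y ≤ C / α * y ^ (-α) := by
  -- `f + C/α · y^(-α)` is nonincreasing on `[y₀, ∞)` and tends to `c`
  set h : ℝ → ℝ := fun z => f z + C / α * z ^ (-α)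
  have hderiv : ∀ z, 0 < z → HasDerivAt h (deriv f z - C * z ^ (-α - 1)) z := fun z hz =>
    ((hf z).hasDerivAt.add ((Real.hasDerivAt_rpow_const (p := -α) (Or.inl hz.ne')).const_mul
      (C / α))).congr_deriv (by field_simp; ring)
  have hanti : AntitoneOn h (Ici y₀) := by
    refine antitoneOn_of_hasDerivWithinAt_nonpos (convex_Ici _)
      (fun z hz => (hderiv z (hy₀.trans_le hz)).continuousAt.continuousWithinAt)
      (fun z hz => (hderiv z ?_).hasDerivWithinAt) fun z hz => ?_
    · rw [interior_Ici] at hz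
      exact hy₀.trans hz
    · rw [interior_Ici] at hz
      exact sub_nonpos.2 (hdecay z hz.le)
  have htend : Tendsto h atTop (𝓝 c) := by
    simpa using hlim.add ((tendsto_rpow_neg_atTop hα).const_mul (C / α))
  have : c ≤ h y := le_of_tendsto htend <|
    (eventually_ge_atTop y).mono fun z hz => hanti hy (hy.trans hz) hz
  simp only [h] at this
  linarith

theorem le_mul_rpow_of_le_mul_rpow_neg {y t A α : ℝ} (hy : 0 < y) (ht : 0 < t) (hα : 0 < α)
    (h : t ≤ A * y ^ (-α)) : y ≤ A ^ α⁻¹ * t ^ (-α⁻¹) := by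
  have hyα : 0 < y ^ (-α) := Real.rpow_pos_of_pos hy _
  have hA : 0 < A := pos_of_mul_pos_left (ht.trans_le h) hyα.le
  have hle : y ≤ (t / A) ^ (-α)⁻¹ :=
    (Real.le_rpow_inv_iff_of_neg hy (div_pos ht hA) (neg_lt_zero.2 hα)).2
      ((div_le_iff₀' hA).2 h)
  rwa [Real.div_rpow ht.le hA.le, inv_neg, Real.rpow_neg hA.le, div_inv_eq_mul, mul_comm] at hle

theorem intervalIntegrable_of_abs_le_rpow {g : ℝ → ℝ} {s₀ c K β : ℝ} (hs₀ : s₀ ≤ c) (hβ : β < 1)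
    (hg : ContinuousOn g (Ioo s₀ c)) (hbound : ∀ s ∈ Ioo s₀ c, |g s| ≤ K * (c - s) ^ (-β)) :
    IntervalIntegrable g volume s₀ c := by
  have hmaj : IntervalIntegrable (fun s => K * (c - s) ^ (-β)) volume s₀ c := by
    simpa using ((intervalIntegral.intervalIntegrable_rpow' (r := -β) (by linarith)).comp_sub_left c
      (a := c - s₀) (b := 0)).const_mul K
  rw [intervalIntegrable_iff_integrableOn_Ioo_of_le hs₀] at hmaj ⊢
  exact hmaj.mono' (hg.aestronglyMeasurable measurableSet_Ioo)
    (ae_restrict_of_forall_mem measurableSet_Ioo hbound)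

theorem intervalIntegrable_invFun_zero_of_deriv_le_rpow {Φ : ℝ → ℝ} {c C α y₀ : ℝ}
    (hΦ : StrictMono Φ) (hΦd : Differentiable ℝ Φ) (hrange : range Φ = Ioo (-c) c)
    (hlim : Tendsto Φ atTop (𝓝 c)) (hα : 1 < α) (hy₀ : 0 < y₀)
    (hdecay : ∀ y, y₀ ≤ y → deriv Φ y ≤ C * y ^ (-α - 1)) :
    IntervalIntegrable (Function.invFun Φ) volume 0 c := by
  have hmem : ∀ y, Φ y ∈ Ioo (-c) c := fun y => hrange ▸ mem_range_self y
  have hcont := continuousOn_invFun hΦ hrange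
  obtain ⟨hc₁, hc₂⟩ := hmem 0
  have h0 : (0 : ℝ) ∈ Ioo (-c) c := ⟨by linarith, by linarith⟩
  have hleft : IntervalIntegrable (Function.invFun Φ) volume 0 (Φ y₀) :=
    (hcont.mono (ordConnected_Ioo.uIcc_subset h0 (hmem y₀))).intervalIntegrable
  refine hleft.trans (intervalIntegrable_of_abs_le_rpow (K := (C / α) ^ α⁻¹) (hmem y₀).2.le
    (inv_lt_one_of_one_lt₀ hα) (hcont.mono (Ioo_subset_Ioo_left (hmem y₀).1.le)) fun s hs => ?_)
  have hΦg := apply_invFun_of_mem_Ioo hrange ⟨(hmem y₀).1.trans hs.1, hs.2⟩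
  have hy : y₀ < Function.invFun Φ s := hΦ.lt_iff_lt.mp (by rw [hΦg]; exact hs.1)
  rw [abs_of_pos (hy₀.trans hy)]
  -- the tail bound at `y = invFun Φ s` reads `c - s ≤ C/α · (invFun Φ s)^(-α)`
  refine le_mul_rpow_of_le_mul_rpow_neg (hy₀.trans hy) (sub_pos.2 hs.2) (by linarith) ?_
  simpa [hΦg] using sub_le_of_deriv_le_rpow hΦd hlim (by linarith) hy₀ hdecay hy.le

section OddIntegrand

variable {g : ℝ → ℝ} {c : ℝ}

theorem IntervalIntegrable.neg_Icc_of_odd (hc : 0 ≤ c) (hg : IntervalIntegrable g volume 0 c)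
    (hodd : ∀ x ∈ Ioo (-c) c, g (-x) = -g x) : IntervalIntegrable g volume (-c) 0 := by
  have hneg := ((IntervalIntegrable.iff_comp_neg (f := g)).mp hg).symm.neg
  rw [neg_zero] at hneg
  refine hneg.congr_uIoo fun x hx => ?_
  rw [uIoo_of_le (by linarith)] at hx
  simp only [Pi.neg_apply, hodd x ⟨hx.1, hx.2.trans_le hc⟩, neg_neg]

theorem integral_zero_neg_of_odd (hc : 0 ≤ c) (hodd : ∀ x ∈ Ioo (-c) c, g (-x) = -g x) :
    ∫ s in 0..-c, g s = ∫ s in 0..c, g s := by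
  have h := intervalIntegral.integral_comp_neg (a := 0) (b := c) g
  rw [intervalIntegral.integral_congr_uIoo (g := fun x => -g x) fun x hx => ?_,
    intervalIntegral.integral_neg, neg_zero, intervalIntegral.integral_symm 0 (-c)] at h
  · exact (neg_inj.mp h).symm
  · rw [uIoo_of_le hc] at hx
    exact hodd x ⟨by linarith [hx.1], hx.2⟩

theorem nonneg_of_monotoneOn_of_odd (hmono : MonotoneOn g (Ioo (-c) c))
    (hodd : ∀ x ∈ Ioo (-c) c, g (-x) = -g x) {x : ℝ} (hx : x ∈ Ico 0 c) : 0 ≤ g x := by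
  have h0 : (0 : ℝ) ∈ Ioo (-c) c := ⟨by linarith [hx.1, hx.2], by linarith [hx.1, hx.2]⟩
  have hg0 : g 0 = 0 := by linarith [neg_zero (G := ℝ) ▸ hodd 0 h0]
  exact hg0 ▸ hmono h0 ⟨by linarith [hx.1, h0.1], hx.2⟩ hx.1

theorem hasDerivAt_integral_of_continuousOn (hcont : ContinuousOn g (Ioo (-c) c))
    (hint : IntervalIntegrable g volume (-c) c) {u : ℝ} (hu : u ∈ Ioo (-c) c) :
    HasDerivAt (fun u => ∫ s in 0..u, g s) (g u) u := by
  have hsub : uIcc 0 u ⊆ uIcc (-c) c := by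
    rw [uIcc_of_le (show -c ≤ c by linarith [hu.1, hu.2])]
    exact uIcc_subset_Icc ⟨by linarith [hu.1, hu.2], by linarith [hu.1, hu.2]⟩ ⟨hu.1.le, hu.2.le⟩
  exact intervalIntegral.integral_hasDerivAt_right (hint.mono_set hsub)
    (hcont.stronglyMeasurableAtFilter isOpen_Ioo u hu) (hcont.continuousAt (isOpen_Ioo.mem_nhds hu))

theorem continuousOn_primitive_Icc (hc : 0 ≤ c) (hint : IntervalIntegrable g volume (-c) c) :
    ContinuousOn (fun u => ∫ s in 0..u, g s) (Icc (-c) c) := by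
  simpa [uIcc_of_le (show -c ≤ c by linarith)] using
    intervalIntegral.continuousOn_primitive_interval' hint
      (by rw [uIcc_of_le (by linarith)]; exact ⟨by linarith, hc⟩)

theorem integral_le_integral_of_odd (hcont : ContinuousOn g (Ioo (-c) c))
    (hmono : MonotoneOn g (Ioo (-c) c)) (hodd : ∀ x ∈ Ioo (-c) c, g (-x) = -g x)
    (hint : IntervalIntegrable g volume (-c) c) {u : ℝ} (hu : u ∈ Icc (-c) c) :
    ∫ s in 0..u, g s ≤ ∫ s in 0..c, g s := by
  have hc : 0 ≤ c := by linarith [hu.1, hu.2]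
  set G : ℝ → ℝ := fun u => ∫ s in 0..u, g s
  have hGc : ContinuousOn G (Icc (-c) c) := continuousOn_primitive_Icc hc hint
  have hG' : ∀ {a b}, -c ≤ a → b ≤ c → ∀ x ∈ interior (Icc a b),
      HasDerivWithinAt G (g x) (interior (Icc a b)) x := fun ha hb x hx => by
    rw [interior_Icc] at hx
    exact (hasDerivAt_integral_of_continuousOn hcont hint
      ⟨ha.trans_lt hx.1, hx.2.trans_le hb⟩).hasDerivWithinAt
  rcases le_or_gt 0 u with hu0 | hu0
  · have hGmono : MonotoneOn G (Icc 0 c) :=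
      monotoneOn_of_hasDerivWithinAt_nonneg (convex_Icc 0 c)
        (hGc.mono (Icc_subset_Icc (by linarith) le_rfl)) (hG' (by linarith) le_rfl)
        fun x hx => by
          rw [interior_Icc] at hx
          exact nonneg_of_monotoneOn_of_odd hmono hodd ⟨hx.1.le, hx.2⟩
    exact hGmono ⟨hu0, hu.2⟩ ⟨hc, le_rfl⟩ hu.2
  · have hGanti : AntitoneOn G (Icc (-c) 0) :=
      antitoneOn_of_hasDerivWithinAt_nonpos (convex_Icc (-c) 0)
        (hGc.mono (Icc_subset_Icc le_rfl hc)) (hG' le_rfl hc) fun x hx => by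
          rw [interior_Icc] at hx
          have := nonneg_of_monotoneOn_of_odd hmono hodd (x := -x)
            ⟨by linarith [hx.2], by linarith [hx.1]⟩
          rw [hodd x ⟨hx.1, by linarith [hx.2]⟩] at this
          linarith
    calc G u ≤ G (-c) := hGanti ⟨le_rfl, by linarith⟩ ⟨hu.1, hu0.le⟩ hu.1
      _ = G c := integral_zero_neg_of_odd hc hodd

end OddIntegrand

theorem intervalIntegrable_invFun_of_deriv_le_rpow {Φ : ℝ → ℝ} {c C α y₀ : ℝ}
    (hΦ : StrictMono Φ) (hΦd : Differentiable ℝ Φ) (hrange : range Φ = Ioo (-c) c)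
    (hlim : Tendsto Φ atTop (𝓝 c)) (hc : 0 ≤ c) (hodd : ∀ y, Φ (-y) = -Φ y) (hα : 1 < α)
    (hy₀ : 0 < y₀) (hdecay : ∀ y, y₀ ≤ y → deriv Φ y ≤ C * y ^ (-α - 1)) :
    IntervalIntegrable (Function.invFun Φ) volume (-c) c := by
  have h := intervalIntegrable_invFun_zero_of_deriv_le_rpow hΦ hΦd hrange hlim hα hy₀ hdecay
  exact (h.neg_Icc_of_odd hc fun x hx => invFun_neg_of_odd hΦ hrange hodd hx).trans h

noncomputable def velocityProfile (G : ℝ → ℝ) (c a m υ κ : ℝ) : ℝ :=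
  (υ ^ (m + 1) + ((m + 1) / a) * (G c - G (c - a * κ))) ^ (1 / (m + 1))

section VelocityProfile

variable {G g : ℝ → ℝ} {c a m υ κ : ℝ}

theorem sub_mul_mem_Icc (ha : 0 < a) (hκ : κ ∈ Icc 0 (2 * c / a)) : c - a * κ ∈ Icc (-c) c := by
  have := (le_div_iff₀' ha).1 hκ.2
  constructor <;> nlinarith [hκ.1]

theorem sub_mul_mem_Ioo (ha : 0 < a) (hκ : κ ∈ Ioo 0 (2 * c / a)) : c - a * κ ∈ Ioo (-c) c := by
  have := (lt_div_iff₀' ha).1 hκ.2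
  constructor <;> nlinarith [hκ.1]

theorem rpow_le_velocityProfile_radicand (ha : 0 < a) (hm : 0 ≤ m)
    (hGle : ∀ u ∈ Icc (-c) c, G u ≤ G c) (hκ : κ ∈ Icc 0 (2 * c / a)) :
    υ ^ (m + 1) ≤ υ ^ (m + 1) + ((m + 1) / a) * (G c - G (c - a * κ)) :=
  le_add_of_nonneg_right <|
    mul_nonneg (by positivity) (sub_nonneg.2 (hGle _ (sub_mul_mem_Icc ha hκ)))

theorem le_velocityProfile (ha : 0 < a) (hm : 0 ≤ m) (hυ : 0 ≤ υ)
    (hGle : ∀ u ∈ Icc (-c) c, G u ≤ G c) (hκ : κ ∈ Icc 0 (2 * c / a)) :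
    υ ≤ velocityProfile G c a m υ κ := by
  calc υ = (υ ^ (m + 1)) ^ (1 / (m + 1)) := by
        rw [← Real.rpow_mul hυ, mul_one_div_cancel (by linarith), Real.rpow_one]
    _ ≤ _ := Real.rpow_le_rpow (by positivity) (rpow_le_velocityProfile_radicand ha hm hGle hκ)
        (by positivity)

theorem velocityProfile_eq_of_apply_eq (hm : 0 ≤ m) (hυ : 0 ≤ υ) (hG : G (c - a * κ) = G c) :
    velocityProfile G c a m υ κ = υ := by
  rw [velocityProfile, hG, sub_self, mul_zero, add_zero, ← Real.rpow_mul hυ,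
    mul_one_div_cancel (by linarith), Real.rpow_one]

theorem velocityProfile_zero (hm : 0 ≤ m) (hυ : 0 ≤ υ) : velocityProfile G c a m υ 0 = υ :=
  velocityProfile_eq_of_apply_eq hm hυ (by simp)

theorem velocityProfile_two_mul_div (ha : a ≠ 0) (hm : 0 ≤ m) (hυ : 0 ≤ υ) (hG : G (-c) = G c) :
    velocityProfile G c a m υ (2 * c / a) = υ :=
  velocityProfile_eq_of_apply_eq hm hυ (by rwa [show c - a * (2 * c / a) = -c by field_simp; ring])

theorem continuousOn_velocityProfile (ha : 0 < a) (hm : 0 ≤ m) (hG : ContinuousOn G (Icc (-c) c)) :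
    ContinuousOn (velocityProfile G c a m υ) (Icc 0 (2 * c / a)) := by
  refine ContinuousOn.rpow_const ?_ fun _ _ => Or.inr (by positivity)
  exact continuousOn_const.add (continuousOn_const.mul (continuousOn_const.sub
    (hG.comp (by fun_prop) fun κ hκ => sub_mul_mem_Icc ha hκ)))

theorem hasDerivAt_velocityProfile (ha : 0 < a) (hm : 0 ≤ m) (hυ : 0 < υ)
    (hGle : ∀ u ∈ Icc (-c) c, G u ≤ G c) (hGd : ∀ u ∈ Ioo (-c) c, HasDerivAt G (g u) u)
    (hκ : κ ∈ Ioo 0 (2 * c / a)) :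
    HasDerivAt (velocityProfile G c a m υ)
      (g (c - a * κ) / velocityProfile G c a m υ κ ^ m) κ := by
  have hR : 0 < υ ^ (m + 1) + ((m + 1) / a) * (G c - G (c - a * κ)) :=
    (Real.rpow_pos_of_pos hυ _).trans_le
      (rpow_le_velocityProfile_radicand ha hm hGle (Ioo_subset_Icc_self hκ))
  have hR' : HasDerivAt (fun κ => υ ^ (m + 1) + ((m + 1) / a) * (G c - G (c - a * κ)))
      ((m + 1) * g (c - a * κ)) κ := by
    have hin : HasDerivAt (fun κ : ℝ => c - a * κ) (-a) κ := by
      simpa using ((hasDerivAt_id κ).const_mul a).const_sub c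
    exact (((hGd _ (sub_mul_mem_Ioo ha hκ)).comp κ hin).const_sub (G c)).const_mul ((m + 1) / a)
      |>.const_add _ |>.congr_deriv (by field_simp)
  refine (hR'.rpow_const (p := 1 / (m + 1)) (Or.inl hR.ne')).congr_deriv ?_
  have hexp : 1 / (m + 1) - 1 = -(1 / (m + 1) * m) := by field_simp; ring
  rw [velocityProfile, ← Real.rpow_mul hR.le, hexp, Real.rpow_neg hR.le]
  field_simp

theorem contDiffOn_velocityProfile (ha : 0 < a) (hm : 0 ≤ m) (hυ : 0 < υ)
    (hGc : ContinuousOn G (Icc (-c) c)) (hGle : ∀ u ∈ Icc (-c) c, G u ≤ G c)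
    (hGd : ∀ u ∈ Ioo (-c) c, HasDerivAt G (g u) u) (hg : ContinuousOn g (Ioo (-c) c)) :
    ContDiffOn ℝ 1 (velocityProfile G c a m υ) (Ioo 0 (2 * c / a)) := by
  set U := velocityProfile G c a m υ
  have hU : ∀ κ ∈ Ioo 0 (2 * c / a), HasDerivAt U (g (c - a * κ) / U κ ^ m) κ :=
    fun κ hκ => hasDerivAt_velocityProfile ha hm hυ hGle hGd hκ
  have hUpos : ∀ κ ∈ Ioo 0 (2 * c / a), 0 < U κ := fun κ hκ =>
    hυ.trans_le (le_velocityProfile ha hm hυ.le hGle (Ioo_subset_Icc_self hκ))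
  have hUc := (continuousOn_velocityProfile (υ := υ) ha hm hGc).mono Ioo_subset_Icc_self
  have hderiv : ContinuousOn (deriv U) (Ioo 0 (2 * c / a)) := by
    refine ContinuousOn.congr ?_ fun κ hκ => (hU κ hκ).deriv
    refine (hg.comp (by fun_prop) fun κ hκ => sub_mul_mem_Ioo ha hκ).div
      (hUc.rpow_const fun κ hκ => Or.inl (hUpos κ hκ).ne') fun κ hκ => ?_
    exact (Real.rpow_pos_of_pos (hUpos κ hκ) m).ne'
  exact (contDiffOn_succ_iff_deriv_of_isOpen (n := 0) isOpen_Ioo).2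
    ⟨fun κ hκ => (hU κ hκ).differentiableAt.differentiableWithinAt, by simp,
      contDiffOn_zero.2 hderiv⟩

theorem velocityProfile_rpow_mul_deriv (ha : 0 < a) (hm : 0 ≤ m) (hυ : 0 < υ)
    (hGle : ∀ u ∈ Icc (-c) c, G u ≤ G c) (hGd : ∀ u ∈ Ioo (-c) c, HasDerivAt G (g u) u)
    (hκ : κ ∈ Ioo 0 (2 * c / a)) :
    velocityProfile G c a m υ κ ^ m * deriv (velocityProfile G c a m υ) κ = g (c - a * κ) := by
  have hpos := hυ.trans_le (le_velocityProfile ha hm hυ.le hGle (Ioo_subset_Icc_self hκ))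
  rw [(hasDerivAt_velocityProfile ha hm hυ hGle hGd hκ).deriv,
    mul_div_cancel₀ _ (Real.rpow_pos_of_pos hpos m).ne']

end VelocityProfile

theorem exists_orderIso_hasDerivAt_comp {V : ℝ → ℝ} (hV : Continuous V) (hpos : ∀ x, 0 < V x)
    (hbdd : BddAbove (range V)) : ∃ κ : ℝ ≃o ℝ, κ 0 = 0 ∧ ∀ ξ, HasDerivAt κ (V (κ ξ)) ξ := by
  -- invert `φ k = ∫₀ᵏ 1/V`, which grows at least like `k / B` in both directions
  obtain ⟨B, hB⟩ := hbdd
  have hB0 : 0 < B := (hpos 0).trans_le (hB (mem_range_self 0))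
  set φ : ℝ → ℝ := fun k => ∫ τ in 0..k, (V τ)⁻¹
  have hφ : ∀ k, HasDerivAt φ (V k)⁻¹ k := fun k =>
    ((hV.inv₀ fun τ => (hpos τ).ne').integral_hasStrictDerivAt 0 k).hasDerivAt
  have hφmono : StrictMono φ := strictMono_of_hasDerivAt_pos hφ fun k => inv_pos.2 (hpos k)
  have hlin : Monotone fun k => φ k - k / B :=
    monotone_of_hasDerivAt_nonneg (fun k => (hφ k).sub ((hasDerivAt_id k).div_const B))
      fun k => sub_nonneg.2 (one_div B ▸ inv_anti₀ (hpos k) (hB (mem_range_self k)))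
  have hφ0 : φ 0 = 0 := intervalIntegral.integral_same
  have hsurj : Function.Surjective φ := by
    refine (continuous_iff_continuousAt.2 fun k => (hφ k).continuousAt).surjective ?_ ?_
    · refine tendsto_atTop_mono' _ ?_ (tendsto_id.atTop_div_const hB0)
      filter_upwards [eventually_ge_atTop 0] with k hk
      have := hlin hk
      simp only [hφ0, zero_div, sub_zero, id] at this ⊢
      linarith
    · refine tendsto_atBot_mono' _ ?_ (tendsto_id.atBot_div_const hB0)
      filter_upwards [eventually_le_atBot 0] with k hk
      have := hlin hk
      simp only [hφ0, zero_div, sub_zero, id] at this ⊢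
      linarith
  set e := hφmono.orderIsoOfSurjective φ hsurj
  refine ⟨e.symm, e.symm_apply_eq.2 hφ0.symm, fun ξ => ?_⟩
  simpa using (hφ (e.symm ξ)).of_local_left_inverse e.symm.continuous.continuousAt
    (inv_ne_zero (hpos _).ne') (Eventually.of_forall e.apply_symm_apply)

theorem exists_contDiff_deriv_eq_comp {U : ℝ → ℝ} {M : ℝ} (hM : 0 < M)
    (hUc : ContinuousOn U (Icc 0 M)) (hUd : DifferentiableOn ℝ U (Ioo 0 M))
    (hUpos : ∀ x ∈ Icc 0 M, 0 < U x) :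
    ∃ ξp > 0, ∃ κ : ℝ → ℝ, ContDiff ℝ 1 κ ∧ κ 0 = 0 ∧ κ ξp = M ∧
      (∀ ξ ∈ Icc 0 ξp, deriv κ ξ = U (κ ξ)) ∧
      ∀ ξ ∈ Ioo 0 ξp, κ ξ ∈ Ioo 0 M ∧ deriv (deriv κ) ξ = deriv U (κ ξ) * U (κ ξ) := by
  set V := IccExtend hM.le ((Icc 0 M).domRestrict U)
  have hV : Continuous V := hUc.domRestrict.Icc_extend'
  have hVU : ∀ x ∈ Icc 0 M, V x = U x := fun x hx => IccExtend_of_mem _ _ hx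
  have hVbdd : BddAbove (range V) := by
    rw [IccExtend_range, range_domRestrict]
    exact (isCompact_Icc.image_of_continuousOn hUc).bddAbove
  obtain ⟨κ, hκ0, hκ⟩ := exists_orderIso_hasDerivAt_comp hV
    (fun x => hUpos _ (projIcc 0 M hM.le x).2) hVbdd
  have hderiv : deriv κ = V ∘ κ := funext fun ξ => (hκ ξ).deriv
  have hκsymm0 : κ.symm 0 = 0 := κ.symm_apply_eq.2 hκ0.symm
  have hκM : κ (κ.symm M) = M := κ.apply_symm_apply M
  refine ⟨κ.symm M, hκsymm0 ▸ κ.symm.strictMono hM, κ,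
    contDiff_one_iff_deriv.2 ⟨fun ξ => (hκ ξ).differentiableAt, hderiv ▸ hV.comp κ.continuous⟩,
    hκ0, hκM, fun ξ hξ => ?_, fun ξ hξ => ?_⟩
  · rw [hderiv, Function.comp_apply, hVU]
    exact ⟨hκ0 ▸ κ.monotone hξ.1, hκM ▸ κ.monotone hξ.2⟩
  · have hξ' : κ ξ ∈ Ioo 0 M := ⟨hκ0 ▸ κ.strictMono hξ.1, hκM ▸ κ.strictMono hξ.2⟩
    have hVd : HasDerivAt V (deriv U (κ ξ)) (κ ξ) :=
      (hUd.differentiableAt (isOpen_Ioo.mem_nhds hξ')).hasDerivAt.congr_of_eventuallyEq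
        (eventually_of_mem (isOpen_Ioo.mem_nhds hξ') fun x hx => hVU x (Ioo_subset_Icc_self hx))
    refine ⟨hξ', ?_⟩
    rw [hderiv, (hVd.comp ξ (hκ ξ)).deriv, hVU _ (Ioo_subset_Icc_self hξ')]

theorem stmt_18_general (c α : ℝ) (hc : 0 < c) (hα : 2 ≤ α)
    (Φ : ℝ → ℝ) (hΦ : ContDiff ℝ 2 Φ)
    (hodd : ∀ y : ℝ, Φ (-y) = -Φ y)
    (hΦ' : ∀ y : ℝ, 0 < deriv Φ y)
    (hlim : Filter.Tendsto Φ Filter.atTop (nhds c))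
    (C₀ y₀ : ℝ) (hy₀ : 0 < y₀)
    (hdecay : ∀ y : ℝ, y₀ ≤ y → deriv Φ y ≤ C₀ * y ^ (-α - 1))
    (a m : ℝ) (ha : 0 < a) (hm : 0 ≤ m)
    (υpm : ℝ) (hυpm : 0 < υpm) :
    let g : ℝ → ℝ := Function.invFun Φ
    let G : ℝ → ℝ := fun u => ∫ s in (0:ℝ)..u, g s
    let M : ℝ := 2 * c / a
    let U : ℝ → ℝ := fun κ =>
      (υpm ^ (m + 1) + ((m + 1) / a) * (G c - G (c - a * κ))) ^ (1 / (m + 1))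
    ContinuousOn U (Set.Icc 0 M) ∧
    ContDiffOn ℝ 1 U (Set.Ioo 0 M) ∧
    U 0 = υpm ∧ U M = υpm ∧
    (∀ κ ∈ Set.Icc (0:ℝ) M, υpm ≤ U κ) ∧
    (∀ κ ∈ Set.Ioo (0:ℝ) M, (U κ) ^ m * deriv U κ = g (c - a * κ)) ∧
    ∃ ξm ξp : ℝ, ξm < ξp ∧ ∃ κf : ℝ → ℝ,
      ContDiffOn ℝ 1 κf (Set.Icc ξm ξp) ∧
      ContinuousOn (deriv κf) (Set.Icc ξm ξp) ∧
      κf ξm = 0 ∧ κf ξp = M ∧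
      deriv κf ξm = υpm ∧ deriv κf ξp = υpm ∧
      (∀ ξ ∈ Set.Ioo ξm ξp,
        (deriv κf ξ) ^ (m - 1) * deriv (deriv κf) ξ = g (c - a * κf ξ)) := by
  intro g G M U
  have hΦmono : StrictMono Φ := strictMono_of_deriv_pos hΦ'
  have hrange := range_eq_Ioo_of_odd hΦmono hΦ.continuous hodd hlim
  have hgc : ContinuousOn g (Ioo (-c) c) := continuousOn_invFun hΦmono hrange
  have hgodd : ∀ x ∈ Ioo (-c) c, g (-x) = -g x := fun x hx =>
    invFun_neg_of_odd hΦmono hrange hodd hx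
  have hgint : IntervalIntegrable g volume (-c) c :=
    intervalIntegrable_invFun_of_deriv_le_rpow hΦmono (hΦ.differentiable (by norm_num)) hrange
      hlim hc.le hodd (by linarith) hy₀ hdecay
  have hGc : ContinuousOn G (Icc (-c) c) := continuousOn_primitive_Icc hc.le hgint
  have hGle : ∀ u ∈ Icc (-c) c, G u ≤ G c := fun u hu =>
    integral_le_integral_of_odd hgc (strictMonoOn_invFun hΦmono hrange).monotoneOn hgodd hgint hu
  have hGd : ∀ u ∈ Ioo (-c) c, HasDerivAt G (g u) u := fun u hu =>
    hasDerivAt_integral_of_continuousOn hgc hgint hu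
  have hU0 : U 0 = υpm := velocityProfile_zero hm hυpm.le
  have hUM : U M = υpm :=
    velocityProfile_two_mul_div ha.ne' hm hυpm.le (integral_zero_neg_of_odd hc.le hgodd)
  have hUge : ∀ κ ∈ Icc 0 M, υpm ≤ U κ := fun κ hκ => le_velocityProfile ha hm hυpm.le hGle hκ
  have hUcd : ContDiffOn ℝ 1 U (Ioo 0 M) := contDiffOn_velocityProfile ha hm hυpm hGc hGle hGd hgc
  have hUode : ∀ κ ∈ Ioo 0 M, U κ ^ m * deriv U κ = g (c - a * κ) := fun κ hκ =>
    velocityProfile_rpow_mul_deriv ha hm hυpm hGle hGd hκ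
  obtain ⟨ξp, hξp, κ, hκ, hκ0, hκM, hκ', hκ''⟩ := exists_contDiff_deriv_eq_comp (U := U)
    (by positivity : 0 < M) (continuousOn_velocityProfile ha hm hGc)
    (hUcd.differentiableOn one_ne_zero) fun x hx => hυpm.trans_le (hUge x hx)
  refine ⟨continuousOn_velocityProfile ha hm hGc, hUcd, hU0, hUM, hUge, hUode, 0, ξp, hξp, κ,
    hκ.contDiffOn, (hκ.continuous_deriv le_rfl).continuousOn, hκ0, hκM, ?_, ?_, fun ξ hξ => ?_⟩
  · rw [hκ' 0 ⟨le_rfl, hξp.le⟩, hκ0, hU0]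
  · rw [hκ' ξp ⟨hξp.le, le_rfl⟩, hκM, hUM]
  · obtain ⟨hκξ, hκ''ξ⟩ := hκ'' ξ hξ
    have hpos : 0 < U (κ ξ) := hυpm.trans_le (hUge _ (Ioo_subset_Icc_self hκξ))
    rw [hκ''ξ, hκ' ξ (Ioo_subset_Icc_self hξ), mul_comm (deriv U _), ← mul_assoc,
      ← Real.rpow_add_one hpos.ne', sub_add_cancel, hUode _ hκξ]

theorem stmt_18 (c α : ℝ) (hc : 0 < c) (hα : 2 ≤ α)
    (Φ : ℝ → ℝ) (hΦ : ContDiff ℝ 2 Φ)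
    (hodd : ∀ y : ℝ, Φ (-y) = -Φ y)
    (hΦ' : ∀ y : ℝ, 0 < deriv Φ y)
    (hlim : Filter.Tendsto Φ Filter.atTop (nhds c))
    (C₀ y₀ : ℝ) (hC₀ : 0 < C₀) (hy₀ : 0 < y₀)
    (hdecay : ∀ y : ℝ, y₀ ≤ y → deriv Φ y ≤ C₀ * y ^ (-α - 1))
    (a m : ℝ) (ha : 0 < a) (hm : 0 ≤ m)
    (υpm : ℝ) (hυpm : 0 < υpm) :
    let g : ℝ → ℝ := Function.invFun Φ
    let G : ℝ → ℝ := fun u => ∫ s in (0:ℝ)..u, g s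
    let M : ℝ := 2 * c / a
    let U : ℝ → ℝ := fun κ =>
      (υpm ^ (m + 1) + ((m + 1) / a) * (G c - G (c - a * κ))) ^ (1 / (m + 1))
    ContinuousOn U (Set.Icc 0 M) ∧
    ContDiffOn ℝ 1 U (Set.Ioo 0 M) ∧
    U 0 = υpm ∧ U M = υpm ∧
    (∀ κ ∈ Set.Icc (0:ℝ) M, υpm ≤ U κ) ∧
    (∀ κ ∈ Set.Ioo (0:ℝ) M, (U κ) ^ m * deriv U κ = g (c - a * κ)) ∧
    ∃ ξm ξp : ℝ, ξm < ξp ∧ ∃ κf : ℝ → ℝ,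
      ContDiffOn ℝ 1 κf (Set.Icc ξm ξp) ∧
      ContinuousOn (deriv κf) (Set.Icc ξm ξp) ∧
      κf ξm = 0 ∧ κf ξp = M ∧
      deriv κf ξm = υpm ∧ deriv κf ξp = υpm ∧
      (∀ ξ ∈ Set.Ioo ξm ξp,
        (deriv κf ξ) ^ (m - 1) * deriv (deriv κf) ξ = g (c - a * κf ξ)) :=
  stmt_18_general c α hc hα Φ hΦ hodd hΦ' hlim C₀ y₀ hy₀ hdecay a m ha hm υpm hυpm
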